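/- arXiv:1812.03546 — 7 statements merged into one kernel-verified Lean document; each statement's English description precedes it below -/
import Mathlib

section
/- Let S₁=(X₁,U₁,→₁) and S₂=(X₂,U₂,→₂) be transition systems with U₂ ⊆ U₁, let Q ⊆ X₁×X₂ be a feedback refinement relation from S₁ to S₂, let 𝒮 ⊆ X₁ be a safe set, and let Ŝ := {x₂ ∈ X₂ : Q⁻¹(x₂) ⊆ 𝒮} be the abstract safe set. If C_q : X₂ → 2^{U₂} is a safety controller for S₂ and Ŝ, then the refined controller C_h := C_q ∘ Q, defined by C_h(x₁) := ⋃_{x₂ ∈ Q(x₁)} C_q(x₂), is a safety controller for S₁ and 𝒮. -/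
/-- The set of `u`-successors of `x` under the transition relation `tr`. -/
def Post {X U : Type*} (tr : X → U → X → Prop) (u : U) (x : X) : Set X :=
  {x' | tr x u x'}

/-- The set of admissible (enabled) inputs at state `x`. -/
def enabled {X U : Type*} (tr : X → U → X → Prop) (x : X) : Set U :=
  {u | (Post tr u x).Nonempty}

/-- `C` is a safety controller for the transition system `tr` and safe set `S`. -/
def IsSafetyController {X U : Type*} (tr : X → U → X → Prop) (S : Set X)
    (C : X → Set U) : Prop :=
  (∀ x, C x ⊆ enabled tr x) ∧
  ({x | (C x).Nonempty} ⊆ S) ∧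
  (∀ x, (C x).Nonempty → ∀ u ∈ C x, Post tr u x ⊆ {y | (C y).Nonempty})

/-- `Q` is a feedback refinement relation from system `tr₁` to system `tr₂`:
it is strict, and for every related pair the enabled inputs of the abstract state are
enabled at the concrete state and abstract transitions over-approximate concrete ones. -/
def IsFRR {X₁ X₂ U : Type*} (tr₁ : X₁ → U → X₁ → Prop) (tr₂ : X₂ → U → X₂ → Prop)
    (Q : X₁ → X₂ → Prop) : Prop :=
  (∀ x₁, ∃ x₂, Q x₁ x₂) ∧
  (∀ x₁ x₂, Q x₁ x₂ →
    (enabled tr₂ x₂ ⊆ enabled tr₁ x₁) ∧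
    (∀ u ∈ enabled tr₂ x₂, ∀ x₁' ∈ Post tr₁ u x₁, ∀ x₂', Q x₁' x₂' → x₂' ∈ Post tr₂ u x₂))

/-- Controller refinement: if `C_q` is a safety controller for the abstraction `S₂` and the
abstract safe set `Ŝ = {x₂ | Q⁻¹(x₂) ⊆ S}`, then `C_h = C_q ∘ Q` is a safety controller for
the concrete system `S₁` and the safe set `S`. -/
theorem refined_controller_is_safety_controller
    {X₁ X₂ U : Type*}
    (tr₁ : X₁ → U → X₁ → Prop) (tr₂ : X₂ → U → X₂ → Prop)
    (U₁ U₂ : Set U) (hU : U₂ ⊆ U₁)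
    (htr₁ : ∀ x u x', tr₁ x u x' → u ∈ U₁)
    (htr₂ : ∀ x u x', tr₂ x u x' → u ∈ U₂)
    (Q : X₁ → X₂ → Prop) (hQ : IsFRR tr₁ tr₂ Q)
    (S : Set X₁)
    (Cq : X₂ → Set U)
    (hCq : IsSafetyController tr₂ {x₂ | {x₁ | Q x₁ x₂} ⊆ S} Cq) :
    IsSafetyController tr₁ S (fun x₁ => {u | ∃ x₂, Q x₁ x₂ ∧ u ∈ Cq x₂}) := by
  obtain ⟨hstrict, hfrr⟩ := hQ
  obtain ⟨hCq1, hCq2, hCq3⟩ := hCq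
  refine ⟨?_, ?_, ?_⟩
  · rintro x₁ u ⟨x₂, hQx, hu⟩
    exact (hfrr x₁ x₂ hQx).1 (hCq1 x₂ hu)
  · rintro x₁ ⟨u, x₂, hQx, hu⟩
    exact hCq2 ⟨u, hu⟩ hQx
  · rintro x₁ - u ⟨x₂, hQx, hu⟩ x₁' hx₁'
    obtain ⟨x₂', hQx'⟩ := hstrict x₁'
    have hu2 : u ∈ enabled tr₂ x₂ := hCq1 x₂ hu
    have hpost : x₂' ∈ Post tr₂ u x₂ := (hfrr x₁ x₂ hQx).2 u hu2 x₁' hx₁' x₂' hQx'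
    obtain ⟨u', hu'⟩ := hCq3 x₂ ⟨u, hu⟩ u hu hpost
    exact ⟨u', x₂', hQx', hu'⟩
end

section
/- Let S₁=(X₁,U₁,→₁) and S₂=(X₂,U₂,→₂) be transition systems with U₂ ⊆ U₁, let Q ⊆ X₁×X₂ be a feedback refinement relation from S₁ to S₂, let Ŝ ⊆ X₂, and let C_q : X₂ → 2^{U₂} be a safety controller for S₂ and Ŝ. Then for every (x₁,x₂) ∈ Q and every u ∈ C_q(x₂), every u-successor x₁' ∈ Post_u(x₁) of x₁ in S₁ satisfies Q(x₁') ⊆ dom(C_q), and consequently x₁' ∈ dom(C_q ∘ Q), where (C_q ∘ Q)(x) := ⋃_{x₂ ∈ Q(x)} C_q(x₂). -/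
/-- If `Q` is a feedback refinement relation from `S₁` to `S₂` and `C_q` is a safety
controller for `S₂` and `Shat`, then for every `(x₁,x₂) ∈ Q`, every `u ∈ C_q(x₂)` and every
`u`-successor `x₁'` of `x₁`, one has `Q(x₁') ⊆ dom(C_q)`, and consequently
`x₁' ∈ dom(C_q ∘ Q)`. -/
theorem successor_in_dom_of_refined
    {X₁ X₂ U : Type*}
    (tr₁ : X₁ → U → X₁ → Prop) (tr₂ : X₂ → U → X₂ → Prop)
    (U₁ U₂ : Set U) (hU : U₂ ⊆ U₁)
    (htr₁ : ∀ x u x', tr₁ x u x' → u ∈ U₁)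
    (htr₂ : ∀ x u x', tr₂ x u x' → u ∈ U₂)
    (Q : X₁ → X₂ → Prop) (hQ : IsFRR tr₁ tr₂ Q)
    (Shat : Set X₂)
    (Cq : X₂ → Set U)
    (hCq : IsSafetyController tr₂ Shat Cq) :
    ∀ x₁ x₂, Q x₁ x₂ → ∀ u ∈ Cq x₂, ∀ x₁' ∈ Post tr₁ u x₁,
      ({x₂' | Q x₁' x₂'} ⊆ {y | (Cq y).Nonempty}) ∧
      x₁' ∈ {x | ({v | ∃ y, Q x y ∧ v ∈ Cq y} : Set U).Nonempty} := by
  intro x₁ x₂ hq u hu x₁' hx₁'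
  have henabled : u ∈ enabled tr₂ x₂ := hCq.1 x₂ hu
  have hsub : {x₂' | Q x₁' x₂'} ⊆ {y | (Cq y).Nonempty} := by
    intro x₂' hq'
    have hpost : x₂' ∈ Post tr₂ u x₂ :=
      (hQ.2 x₁ x₂ hq).2 u henabled x₁' hx₁' x₂' hq'
    exact hCq.2.2 x₂ ⟨u, hu⟩ u hu hpost
  refine ⟨hsub, ?_⟩
  obtain ⟨x₂', hq'⟩ := hQ.1 x₁'
  obtain ⟨v, hv⟩ := hsub hq'
  exact ⟨v, x₂', hq', hv⟩
end

section
/- Let S=(X,U,→) be a transition system and 𝒮 ⊆ X a safe set. Define the operator F on subsets of X by F(Z) := {x ∈ 𝒮 : ∃ u ∈ U(x), Post_u(x) ⊆ Z}. Then F is monotone with respect to set inclusion, and if W denotes the greatest fixed point of F (which exists by the Knaster–Tarski theorem), the map C* defined by C*(x) := {u ∈ U(x) : Post_u(x) ⊆ W} for x ∈ W and C*(x) := ∅ for x ∉ W is a safety controller for S and 𝒮 with dom(C*) = W. -/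
/-- The safety operator `F(Z) = {x ∈ S : ∃ u ∈ U(x), Post_u(x) ⊆ Z}` is monotone, and if
`W` is its greatest fixed point then the controller
`C*(x) = {u ∈ U(x) : Post_u(x) ⊆ W}` for `x ∈ W` (and `∅` otherwise) is a safety
controller for the system and `S` with domain `W`. -/
theorem fixed_point_controller_is_safety_controller
    {X U : Type*}
    (tr : X → U → X → Prop) (S : Set X) :
    Monotone (fun Z : Set X => {x ∈ S | ∃ u ∈ enabled tr x, Post tr u x ⊆ Z}) ∧
    ∀ W : Set X,
      ({x ∈ S | ∃ u ∈ enabled tr x, Post tr u x ⊆ W} = W ∧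
        ∀ Z : Set X, {x ∈ S | ∃ u ∈ enabled tr x, Post tr u x ⊆ Z} = Z → Z ⊆ W) →
      IsSafetyController tr S
          (fun x => {u | x ∈ W ∧ u ∈ enabled tr x ∧ Post tr u x ⊆ W}) ∧
        {x | ({u | x ∈ W ∧ u ∈ enabled tr x ∧ Post tr u x ⊆ W} : Set U).Nonempty} = W := by
  constructor
  · intro A B hAB x hx
    obtain ⟨hS, u, hu, hpost⟩ := hx
    exact ⟨hS, u, hu, hpost.trans hAB⟩
  · intro W ⟨hfix, _⟩
    have hdom : {x | ({u | x ∈ W ∧ u ∈ enabled tr x ∧ Post tr u x ⊆ W} : Set U).Nonempty} = W := by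
      ext x
      constructor
      · rintro ⟨u, hW, _, _⟩; exact hW
      · intro hW
        have := hfix ▸ hW
        obtain ⟨_, u, hu, hp⟩ : x ∈ {x ∈ S | ∃ u ∈ enabled tr x, Post tr u x ⊆ W} := by
          rw [hfix]; exact hW
        exact ⟨u, hW, hu, hp⟩
    refine ⟨⟨fun x u hu => hu.2.1, ?_, ?_⟩, hdom⟩
    · intro x hx
      obtain ⟨u, hW, -, -⟩ := hx
      have : x ∈ {x ∈ S | ∃ u ∈ enabled tr x, Post tr u x ⊆ W} := by rw [hfix]; exact hW
      exact this.1
    · intro x _ u hu y hy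
      have hyW : y ∈ W := hu.2.2 hy
      have : y ∈ {x | ({u | x ∈ W ∧ u ∈ enabled tr x ∧ Post tr u x ⊆ W} : Set U).Nonempty} := by
        rw [hdom]; exact hyW
      exact this
end

section
/- Let S=(X,U,→) be a transition system and 𝒮 ⊆ X a safe set. Define F(Z) := {x ∈ 𝒮 : ∃ u ∈ U(x), Post_u(x) ⊆ Z} and let W be the greatest fixed point of the monotone operator F. Then the controller C*(x) := {u ∈ U(x) : Post_u(x) ⊆ W} for x ∈ W (and ∅ otherwise) is maximal among safety controllers: for every safety controller C for S and 𝒮 it holds that dom(C) ⊆ W and C(x) ⊆ C*(x) for every x ∈ X. -/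
/-- If `W` is the greatest fixed point of `F(Z) = {x ∈ S : ∃ u ∈ U(x), Post_u(x) ⊆ Z}`,
then the controller `C*(x) = {u ∈ U(x) : Post_u(x) ⊆ W}` for `x ∈ W` (and `∅` otherwise)
is maximal: every safety controller `C` for the system and `S` satisfies `dom(C) ⊆ W` and
`C(x) ⊆ C*(x)` for every `x`. -/
theorem fixed_point_controller_is_maximal
    {X U : Type*}
    (tr : X → U → X → Prop) (S : Set X)
    (W : Set X)
    (hfix : {x ∈ S | ∃ u ∈ enabled tr x, Post tr u x ⊆ W} = W)
    (hgreatest : ∀ Z : Set X, {x ∈ S | ∃ u ∈ enabled tr x, Post tr u x ⊆ Z} = Z → Z ⊆ W) :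
    ∀ C : X → Set U, IsSafetyController tr S C →
      ({x | (C x).Nonempty} ⊆ W) ∧
      (∀ x, C x ⊆ {u | x ∈ W ∧ u ∈ enabled tr x ∧ Post tr u x ⊆ W}) := by
  intro C hC
  obtain ⟨h1, h2, h3⟩ := hC
  set F : Set X → Set X := fun Z => {x ∈ S | ∃ u ∈ enabled tr x, Post tr u x ⊆ Z} with hF
  have hmono : ∀ Z Z' : Set X, Z ⊆ Z' → F Z ⊆ F Z' := by
    intro Z Z' hZZ x hx
    obtain ⟨hxS, u, hu, hp⟩ := hx
    exact ⟨hxS, u, hu, hp.trans hZZ⟩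
  -- the domain of C is a post-fixed point of F
  set D : Set X := {x | (C x).Nonempty} with hD
  have hDpost : D ⊆ F D := by
    intro x hx
    obtain ⟨u, hu⟩ := hx
    exact ⟨h2 ⟨u, hu⟩, u, h1 x hu, h3 x ⟨u, hu⟩ u hu⟩
  -- Knaster–Tarski: union of all post-fixed points is a fixed point
  set V : Set X := ⋃₀ {Z : Set X | Z ⊆ F Z} with hV
  have hVpost : V ⊆ F V := by
    intro x hx
    obtain ⟨Z, hZ, hxZ⟩ := hx
    exact hmono Z V (fun y hy => ⟨Z, hZ, hy⟩) (hZ hxZ)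
  have hVfix : F V = V := by
    apply Set.Subset.antisymm
    · intro x hx
      exact ⟨F V, hmono V (F V) hVpost, hx⟩
    · exact hVpost
  have hVW : V ⊆ W := hgreatest V hVfix
  have hDW : D ⊆ W := fun x hx => hVW ⟨D, hDpost, hx⟩
  refine ⟨hDW, ?_⟩
  intro x u hu
  exact ⟨hDW ⟨u, hu⟩, h1 x hu, (h3 x ⟨u, hu⟩ u hu).trans hDW⟩
end

section
/- Let U be a set of inputs, U_q ⊆ U, and φ₁, φ₂ : ℝⁿ × U → ℝⁿ. Let S_h be the transition system with state set ℝⁿ, input set U, and transitions x →ᵤ x' iff x' = φ₁(x,u) or x' = φ₂(x,u). Let X_q be a collection of nonempty subsets of ℝⁿ whose union is ℝⁿ, let X̄_q ⊆ X_q, and suppose O assigns to each x_q ∈ X̄_q and u ∈ U_q a set O(x_q,u) ⊆ ℝⁿ such that φ₁(x,u) ∈ O(x_q,u) and φ₂(x,u) ∈ O(x_q,u) for every x ∈ x_q (an over-approximation of the reachable points). Define the abstract transition system S_q with state set X_q and input set U_q by: for x_q ∈ X̄_q and u ∈ U_q, letting A(x_q,u) := {x_q' ∈ X_q : x_q' ∩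 O(x_q,u) ≠ ∅}, set Post_u(x_q) = A(x_q,u) if A(x_q,u) ⊆ X̄_q and Post_u(x_q) = ∅ otherwise; states in X_q \ X̄_q have no outgoing transitions. Then the membership relation Q := {(x, x_q) ∈ ℝⁿ × X_q : x ∈ x_q} is a strict relation and a feedback refinement relation from S_h to S_q, i.e., S_h ⪯_Q S_q. -/
/-- The membership relation between concrete states and the cells of a cover is a
feedback refinement relation from the sampled system `S_h` (with transitions
`x →ᵤ x'` iff `x' = φ₁(x,u)` or `x' = φ₂(x,u)`) to the discrete abstraction `S_q`
built from an over-approximation `O` of the reachable points. -/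
theorem abstraction_feedback_refinement
    {n : ℕ} {U : Type*} (Uq : Set U)
    (φ₁ φ₂ : (Fin n → ℝ) → U → (Fin n → ℝ))
    (Xq : Set (Set (Fin n → ℝ)))
    (hne : ∀ A ∈ Xq, A.Nonempty)
    (hcover : ∀ x : Fin n → ℝ, ∃ A ∈ Xq, x ∈ A)
    (Xqbar : Set (Set (Fin n → ℝ))) (hbar : Xqbar ⊆ Xq)
    (O : Set (Fin n → ℝ) → U → Set (Fin n → ℝ))
    (hO : ∀ xq ∈ Xqbar, ∀ u ∈ Uq, ∀ x ∈ xq, φ₁ x u ∈ O xq u ∧ φ₂ x u ∈ O xq u) :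
    -- concrete sampled transition system S_h
    let trh : (Fin n → ℝ) → U → (Fin n → ℝ) → Prop :=
      fun x u x' => x' = φ₁ x u ∨ x' = φ₂ x u
    -- abstract transition system S_q on the cells of the cover
    let trq : Xq → U → Xq → Prop :=
      fun xq u xq' =>
        (xq : Set (Fin n → ℝ)) ∈ Xqbar ∧ u ∈ Uq ∧
        (∀ y : Xq, ((y : Set (Fin n → ℝ)) ∩ O xq u).Nonempty →
          (y : Set (Fin n → ℝ)) ∈ Xqbar) ∧
        ((xq' : Set (Fin n → ℝ)) ∩ O xq u).Nonempty
    -- the membership relation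
    let Q : (Fin n → ℝ) → Xq → Prop := fun x xq => x ∈ (xq : Set (Fin n → ℝ))
    IsFRR trh trq Q := by
  intro trh trq Q
  constructor
  · intro x
    obtain ⟨A, hA, hx⟩ := hcover x
    exact ⟨⟨A, hA⟩, hx⟩
  · intro x₁ x₂ hQ
    constructor
    · intro u _
      exact ⟨φ₁ x₁ u, Or.inl rfl⟩
    · rintro u ⟨xq'', hbar2, hu, hclosed, _⟩ x₁' hx₁' x₂' hQ'
      have hmem : x₁' ∈ O x₂ u := by
        rcases hx₁' with h | h <;> rw [h]
        · exact (hO _ hbar2 u hu x₁ hQ).1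
        · exact (hO _ hbar2 u hu x₁ hQ).2
      exact ⟨hbar2, hu, hclosed, x₁', hQ', hmem⟩
end

section
/- Let A be a real n×n matrix, B a real n×p matrix, m ∈ ℕ, and set B' := (∑_{i=0}^{m} A^i)·B. Let 𝒰 ⊆ ℝ^p be a set of admissible inputs and I ⊆ ℝⁿ a set such that for every x ∈ I there exists u ∈ 𝒰 with A·x + B·u ∈ I and A^{m+1}·x + B'·u ∈ I. Then for every x₀ ∈ I and every restart pattern δ : ℕ → Bool there exist sequences x : ℕ → ℝⁿ and u : ℕ → ℝ^p with x(0) = x₀, u(k) ∈ 𝒰 for all k, x(k+1) = A^{m+1}·x(k) + B'·u(k) if δ(k) is true and x(k+1) = A·x(k) + B·u(k) otherwise, and x(k) ∈ I for all k ∈ ℕ. -/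
open Matrix Finset

/-- If from every point of `I` there is an admissible input keeping both the one-cycle
successor `A x + B u` and the `(m+1)`-cycle successor `A^{m+1} x + B' u`
(`B' = (∑_{i=0}^m A^i) B`) inside `I`, then for every initial state in `I` and every
restart pattern `δ` there is a closed-loop run that stays in `I` forever. -/
theorem invariant_set_tolerates_restarts
    {n p : ℕ} (A : Matrix (Fin n) (Fin n) ℝ) (B : Matrix (Fin n) (Fin p) ℝ)
    (m : ℕ)
    (𝒰 : Set (Fin p → ℝ)) (I : Set (Fin n → ℝ))
    (hI : ∀ x ∈ I, ∃ u ∈ 𝒰,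
      A.mulVec x + B.mulVec u ∈ I ∧
      (A ^ (m + 1)).mulVec x + ((∑ i ∈ Finset.range (m + 1), A ^ i) * B).mulVec u ∈ I)
    (x₀ : Fin n → ℝ) (hx₀ : x₀ ∈ I) (δ : ℕ → Bool) :
    ∃ (x : ℕ → (Fin n → ℝ)) (u : ℕ → (Fin p → ℝ)),
      x 0 = x₀ ∧
      (∀ k, u k ∈ 𝒰) ∧
      (∀ k, x (k + 1) =
        if δ k then
          (A ^ (m + 1)).mulVec (x k) +
            ((∑ i ∈ Finset.range (m + 1), A ^ i) * B).mulVec (u k)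
        else A.mulVec (x k) + B.mulVec (u k)) ∧
      (∀ k, x k ∈ I) := by
  choose U hU h1 h2 using hI
  -- step function on the subtype of points in I
  let step : ℕ → {y : Fin n → ℝ // y ∈ I} → {y : Fin n → ℝ // y ∈ I} :=
    fun k y =>
      if δ k then
        ⟨(A ^ (m + 1)).mulVec y.1 +
          ((∑ i ∈ Finset.range (m + 1), A ^ i) * B).mulVec (U y.1 y.2),
          h2 y.1 y.2⟩
      else ⟨A.mulVec y.1 + B.mulVec (U y.1 y.2), h1 y.1 y.2⟩
  let X : ℕ → {y : Fin n → ℝ // y ∈ I} := fun k => Nat.rec ⟨x₀, hx₀⟩ step k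
  refine ⟨fun k => (X k).1, fun k => U (X k).1 (X k).2, rfl,
    fun k => hU _ _, fun k => ?_, fun k => (X k).2⟩
  show (step k (X k)).1 = _
  by_cases h : δ k <;> simp [step, h]
end

section
/- Let f : ℝⁿ × ℝ^p → ℝⁿ, let 𝒮_u ⊆ ℝ^p, 𝒮 ⊆ ℝⁿ, I ⊆ 𝒮, and τ_c, τ_r > 0. Assume that for every x ∈ I there exist u ∈ 𝒮_u and a function ξ : ℝ → ℝⁿ with ξ(0) = x, ξ'(t) = f(ξ(t), u) for all t ∈ [0, τ_c + τ_r], ξ(τ_c) ∈ I, ξ(τ_c + τ_r) ∈ I, and ξ(t) ∈ 𝒮 for all t ∈ [0, τ_c + τ_r]. Then for every x₀ ∈ I and every restart pattern δ : ℕ → Bool there exist a function ζ : ℝ → ℝⁿ, inputs u : ℕ → 𝒮_u, and switching times t : ℕ → ℝ with t(0) = 0 and t(k+1) = t(k) + (τ_c + τ_r) if δ(k) is true, t(k+1) = t(k) + τ_c otherwise, such that ζ(0) = x₀, on each interval [t(k), t(k+1)] the function ζ satisfies ζ'(s) = f(ζ(s), u(k)) (derivative within the interval), ζ(t(k)) ∈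 I for all k, and ζ(s) ∈ 𝒮 for all s ≥ 0. -/
/-!
Run the base controller from the current state for one cycle, of length `τc` or `τc + τr`
according to the restart pattern: the hypothesis puts the state back in `I` at the end of the
cycle, so the controller can be applied again, and the trajectory stays in `S` meanwhile.
Concatenating these segments gives the closed-loop trajectory; since every cycle lasts at least
`τc`, the switching times are unbounded and the segments cover `[0, ∞)`.
-/

open Set Filter

section Concatenation

variable {X E : Type*}

theorem exists_mem_Ico_of_tendsto_atTop [LinearOrder X] [NoMaxOrder X] {T : ℕ → X}
    (hT : Tendsto T atTop atTop) {s : X} (hs : T 0 ≤ s) : ∃ k, s ∈ Ico (T k) (T (k + 1)) := by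
  obtain ⟨N, hN⟩ := (hT.eventually_gt_atTop s).exists
  obtain ⟨k, -, hk⟩ := mem_iUnion₂.1 (Ico_subset_biUnion_Ico N T ⟨hs, hN⟩)
  exact ⟨k, hk⟩

theorem tendsto_sum_range_atTop_of_le {L : ℕ → ℝ} {c : ℝ} (hc : 0 < c) (hL : ∀ k, c ≤ L k) :
    Tendsto (fun k => ∑ i ∈ Finset.range k, L i) atTop atTop := by
  refine tendsto_atTop_mono (fun k => ?_) (tendsto_natCast_atTop_atTop.atTop_mul_const hc)
  simpa using Finset.card_nsmul_le_sum (Finset.range k) L c fun i _ => hL i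

open Classical in
noncomputable def concatSegments (T : ℕ → ℝ) (Ξ : ℕ → ℝ → E) (s : ℝ) : E :=
  if h : ∃ k, s < T (k + 1) then Ξ (Nat.find h) (s - T (Nat.find h)) else Ξ 0 s

variable {T : ℕ → ℝ} {Ξ : ℕ → ℝ → E} {s : ℝ} {k : ℕ}

theorem concatSegments_eq_of_mem_Ico (hT : Monotone T) (hs : s ∈ Ico (T k) (T (k + 1))) :
    concatSegments T Ξ s = Ξ k (s - T k) := by
  have h : ∃ k, s < T (k + 1) := ⟨k, hs.2⟩
  have hk : Nat.find h = k :=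
    (Nat.find_eq_iff h).2 ⟨hs.2, fun _ hn => not_lt.2 ((hT hn).trans hs.1)⟩
  rw [concatSegments, dif_pos h, hk]

theorem concatSegments_eq_of_mem_Icc (hT : StrictMono T)
    (hjoin : Ξ (k + 1) 0 = Ξ k (T (k + 1) - T k)) (hs : s ∈ Icc (T k) (T (k + 1))) :
    concatSegments T Ξ s = Ξ k (s - T k) := by
  rcases hs.2.lt_or_eq with hlt | rfl
  · exact concatSegments_eq_of_mem_Ico hT.monotone ⟨hs.1, hlt⟩
  · rw [concatSegments_eq_of_mem_Ico hT.monotone ⟨le_rfl, hT (Nat.lt_succ_self _)⟩, sub_self,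
      hjoin]

end Concatenation

theorem base_controller_safe_under_restarts_general
    {n p : ℕ}
    (f : (Fin n → ℝ) × (Fin p → ℝ) → (Fin n → ℝ))
    (Su : Set (Fin p → ℝ)) (S : Set (Fin n → ℝ)) (I : Set (Fin n → ℝ))
    (τc τr : ℝ) (hτc : 0 < τc) (hτr : 0 < τr)
    (hBC : ∀ x ∈ I, ∃ u ∈ Su, ∃ ξ : ℝ → (Fin n → ℝ),
      ξ 0 = x ∧
      (∀ t ∈ Set.Icc (0 : ℝ) (τc + τr), HasDerivAt ξ (f (ξ t, u)) t) ∧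
      ξ τc ∈ I ∧ ξ (τc + τr) ∈ I ∧
      (∀ t ∈ Set.Icc (0 : ℝ) (τc + τr), ξ t ∈ S))
    (x₀ : Fin n → ℝ) (hx₀ : x₀ ∈ I) (δ : ℕ → Bool) :
    ∃ (ζ : ℝ → (Fin n → ℝ)) (u : ℕ → (Fin p → ℝ)) (t : ℕ → ℝ),
      t 0 = 0 ∧
      (∀ k, t (k + 1) = t k + if δ k then τc + τr else τc) ∧
      ζ 0 = x₀ ∧
      (∀ k, u k ∈ Su) ∧
      (∀ k, ∀ s ∈ Set.Icc (t k) (t (k + 1)),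
        HasDerivWithinAt ζ (f (ζ s, u k)) (Set.Icc (t k) (t (k + 1))) s) ∧
      (∀ k, ζ (t k) ∈ I) ∧
      (∀ s : ℝ, 0 ≤ s → ζ s ∈ S) := by
  choose! u hu ξ hξ0 hξd hξc hξcr hξS using hBC
  let L : ℕ → ℝ := fun k => if δ k then τc + τr else τc
  have hL : ∀ k, τc ≤ L k ∧ L k ≤ τc + τr := fun k => by
    by_cases h : δ k <;> simp [L, h, hτr.le]
  have hstep : ∀ k, ∀ x ∈ I, ξ x (L k) ∈ I := fun k x hx => by
    by_cases h : δ k <;> simp [L, h, hξc x hx, hξcr x hx]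
  let T : ℕ → ℝ := fun k => ∑ i ∈ Finset.range k, L i
  have hT0 : T 0 = 0 := Finset.sum_range_zero L
  have hT : ∀ k, T (k + 1) = T k + L k := fun k => Finset.sum_range_succ L k
  have hTmono : StrictMono T :=
    strictMono_nat_of_lt_succ fun k => by linarith [hT k, (hL k).1]
  let x : ℕ → (Fin n → ℝ) := fun k => Nat.rec x₀ (fun k y => ξ y (L k)) k
  have hx : ∀ k, x k ∈ I := fun k => by
    induction k with
    | zero => exact hx₀
    | succ k ih => exact hstep k _ ih
  let ζ := concatSegments T fun k => ξ (x k)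
  have hζ : ∀ k, ∀ s ∈ Icc (T k) (T (k + 1)), ζ s = ξ (x k) (s - T k) := fun k s hs =>
    concatSegments_eq_of_mem_Icc hTmono
      (by rw [hξ0 _ (hx (k + 1)), hT, add_sub_cancel_left]) hs
  have hcycle : ∀ k, ∀ s ∈ Icc (T k) (T (k + 1)), s - T k ∈ Icc 0 (τc + τr) := fun k s hs =>
    ⟨by linarith [hs.1], by linarith [hs.2, hT k, (hL k).2]⟩
  have hstart : ∀ k, T k ∈ Icc (T k) (T (k + 1)) := fun k => ⟨le_rfl, (hTmono k.lt_succ_self).le⟩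
  refine ⟨ζ, fun k => u (x k), T, hT0, hT, ?_, fun k => hu _ (hx k),
    fun k s hs => ?_, fun k => ?_, fun s hs => ?_⟩
  · simpa [hT0, hξ0 _ hx₀, x] using hζ 0 0 (hstart 0)
  · rw [hζ k s hs]
    exact ((hξd _ (hx k) _ (hcycle k s hs)).comp_sub_const s (T k)).hasDerivWithinAt.congr_of_mem
      (hζ k) hs
  · simpa [hζ k _ (hstart k), hξ0 _ (hx k)] using hx k
  · obtain ⟨k, hk⟩ := exists_mem_Ico_of_tendsto_atTop
      (tendsto_sum_range_atTop_of_le hτc fun k => (hL k).1) (hT0.trans_le hs)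
    rw [hζ k s (Ico_subset_Icc_self hk)]
    exact hξS _ (hx k) _ (hcycle k s (Ico_subset_Icc_self hk))

/-- Safety of the base controller for a nonlinear system under arbitrary restart
patterns: if from every state of the invariant set `I ⊆ S` there are an admissible
constant input and a trajectory that is back in `I` after one control cycle `τ_c`, is in
`I` after a cycle plus a restart `τ_c + τ_r`, and stays in the safe set `S` throughout
`[0, τ_c + τ_r]`, then from any initial state in `I` and for any restart pattern `δ`
there is a closed-loop trajectory, with piecewise-constant admissible input updated at
the switching times, that visits `I` at every switching time and remains in `S` for all
time. -/
theorem base_controller_safe_under_restarts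
    {n p : ℕ}
    (f : (Fin n → ℝ) × (Fin p → ℝ) → (Fin n → ℝ))
    (Su : Set (Fin p → ℝ)) (S : Set (Fin n → ℝ)) (I : Set (Fin n → ℝ))
    (hIS : I ⊆ S)
    (τc τr : ℝ) (hτc : 0 < τc) (hτr : 0 < τr)
    (hBC : ∀ x ∈ I, ∃ u ∈ Su, ∃ ξ : ℝ → (Fin n → ℝ),
      ξ 0 = x ∧
      (∀ t ∈ Set.Icc (0 : ℝ) (τc + τr), HasDerivAt ξ (f (ξ t, u)) t) ∧
      ξ τc ∈ I ∧ ξ (τc + τr) ∈ I ∧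
      (∀ t ∈ Set.Icc (0 : ℝ) (τc + τr), ξ t ∈ S))
    (x₀ : Fin n → ℝ) (hx₀ : x₀ ∈ I) (δ : ℕ → Bool) :
    ∃ (ζ : ℝ → (Fin n → ℝ)) (u : ℕ → (Fin p → ℝ)) (t : ℕ → ℝ),
      t 0 = 0 ∧
      (∀ k, t (k + 1) = t k + if δ k then τc + τr else τc) ∧
      ζ 0 = x₀ ∧
      (∀ k, u k ∈ Su) ∧
      (∀ k, ∀ s ∈ Set.Icc (t k) (t (k + 1)),
        HasDerivWithinAt ζ (f (ζ s, u k)) (Set.Icc (t k) (t (k + 1))) s) ∧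
      (∀ k, ζ (t k) ∈ I) ∧
      (∀ s : ℝ, 0 ≤ s → ζ s ∈ S) :=
  base_controller_safe_under_restarts_general f Su S I τc τr hτc hτr hBC x₀ hx₀ δ
end
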